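/- For every n ≥ 1, every natural number k ≥ 1, and every S : Finset (Fin n), the phase-parity operator D_{S,k} := exp(−(π·i/2^k) • Z_S) belongs to 𝒟_k, i.e. it is a diagonal member of the k-th level 𝒞_k of the Clifford hierarchy. -/

import Mathlib

noncomputable section

/-- The parity operator `Z_S`: the diagonal matrix whose `(z,z)` entry is
`(-1) ^ (∑ j ∈ S, z j)`. -/
def Zgad (n : ℕ) (S : Finset (Fin n)) : Matrix (Fin n → Fin 2) (Fin n → Fin 2) ℂ :=
  Matrix.diagonal fun z => (-1 : ℂ) ^ (∑ j ∈ S, (z j : ℕ))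

/-- `X_j`: the permutation matrix of the involution flipping coordinate `j`. -/
def Xmat (n : ℕ) (j : Fin n) : Matrix (Fin n → Fin 2) (Fin n → Fin 2) ℂ :=
  Matrix.of fun z w => if w = Function.update z j (z j + 1) then 1 else 0

/-- `X_A = ∏_{j ∈ A} X_j`: the permutation matrix flipping all coordinates in `A`. -/
def XA (n : ℕ) (A : Finset (Fin n)) : Matrix (Fin n → Fin 2) (Fin n → Fin 2) ℂ :=
  Matrix.of fun z w => if w = (fun i => z i + if i ∈ A then 1 else 0) then 1 else 0

/-- The `n`-qubit Pauli group: matrices `ω • (X_A * Z_B)` with `ω ∈ {1, i, -1, -i}`. -/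
def Pauli (n : ℕ) : Set (Matrix (Fin n → Fin 2) (Fin n → Fin 2) ℂ) :=
  {U | ∃ ω ∈ ({1, Complex.I, -1, -Complex.I} : Set ℂ),
    ∃ A B : Finset (Fin n), U = ω • (XA n A * Zgad n B)}

/-- The Clifford hierarchy: `𝒞_1 = 𝒫`, and for `k ≥ 2`,
`𝒞_k = {U | U unitary and ∀ P ∈ 𝒫, U P Uᴴ ∈ 𝒞_{k-1}}`. -/
def Cliff (n : ℕ) : ℕ → Set (Matrix (Fin n → Fin 2) (Fin n → Fin 2) ℂ)
  | 0 => Pauli n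
  | 1 => Pauli n
  | k + 2 =>
    {U | U * U.conjTranspose = 1 ∧
      ∀ P ∈ Pauli n, U * P * U.conjTranspose ∈ Cliff n (k + 1)}

/-- `𝒟_k`: the diagonal matrices in the `k`-th level of the Clifford hierarchy. -/
def DiagCliff (n k : ℕ) : Set (Matrix (Fin n → Fin 2) (Fin n → Fin 2) ℂ) :=
  {U | U ∈ Cliff n k ∧ U.IsDiag}

/-- `D_{S,k} = exp(-(π i / 2^k) • Z_S)` for `k : ℕ`. -/
def DopN (n : ℕ) (S : Finset (Fin n)) (k : ℕ) : Matrix (Fin n → Fin 2) (Fin n → Fin 2) ℂ :=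
  NormedSpace.exp ((-(↑Real.pi * Complex.I / (2 : ℂ) ^ k)) • Zgad n S)

namespace Aux15
open scoped symmDiff

variable {n : ℕ}

/-- flip of bit string -/
def flip (A : Finset (Fin n)) (z : Fin n → Fin 2) : Fin n → Fin 2 :=
  fun i => z i + if i ∈ A then 1 else 0

lemma XA_apply (A : Finset (Fin n)) (z w : Fin n → Fin 2) :
    XA n A z w = if w = flip A z then 1 else 0 := rfl

lemma flip_flip (A B : Finset (Fin n)) (z : Fin n → Fin 2) :
    flip B (flip A z) = flip (A ∆ B) z := by
  funext i
  by_cases hA : i ∈ A <;> by_cases hB : i ∈ B <;>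
    simp [flip, hA, hB, Finset.mem_symmDiff, add_assoc]

lemma flip_self (A : Finset (Fin n)) (z : Fin n → Fin 2) : flip A (flip A z) = z := by
  rw [flip_flip, symmDiff_self]
  funext i; simp [flip]

lemma flip_inj (A : Finset (Fin n)) {z x : Fin n → Fin 2} :
    (x = flip A z ↔ z = flip A x) := by
  constructor <;> rintro rfl <;> rw [flip_self]

/-- sign helper -/
def zs (S : Finset (Fin n)) (z : Fin n → Fin 2) : ℂ := ∏ j ∈ S, (-1 : ℂ) ^ ((z j : ℕ))

lemma Zgad_eq (S : Finset (Fin n)) : Zgad n S = Matrix.diagonal (zs S) :=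
  congrArg Matrix.diagonal (funext fun z =>
    (Finset.prod_pow_eq_pow_sum S (fun j => (z j : ℕ)) (-1)).symm)

lemma zs_sq (S : Finset (Fin n)) (z : Fin n → Fin 2) : zs S z * zs S z = 1 := by
  rw [zs, ← Finset.prod_mul_distrib]
  apply Finset.prod_eq_one
  intro j _
  rcases Fin.exists_fin_two.mp ⟨z j, rfl⟩ with h | h <;> rw [h] <;> norm_num

lemma zs_cases (S : Finset (Fin n)) (z : Fin n → Fin 2) : zs S z = 1 ∨ zs S z = -1 := by
  have := zs_sq S z
  have h : (zs S z - 1) * (zs S z + 1) = 0 := by linear_combination this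
  rcases mul_eq_zero.mp h with h | h
  · left; linear_combination h
  · right; linear_combination h

lemma sgn_add (a b : Fin 2) :
    (-1 : ℂ) ^ (((a + b) : Fin 2) : ℕ) = (-1) ^ ((a : ℕ)) * (-1) ^ ((b : ℕ)) := by
  have h : (((a + b) : Fin 2) : ℕ) = ((a : ℕ) + (b : ℕ)) % 2 := rfl
  rw [h, ← neg_one_pow_eq_pow_mod_two, pow_add]

lemma zs_univ (S : Finset (Fin n)) (z : Fin n → Fin 2) :
    zs S z = ∏ j : Fin n, (if j ∈ S then (-1 : ℂ) ^ ((z j : ℕ)) else 1) := by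
  rw [Finset.prod_ite_mem, Finset.univ_inter, zs]

lemma zs_symmDiff (B B' : Finset (Fin n)) (z : Fin n → Fin 2) :
    zs B z * zs B' z = zs (B ∆ B') z := by
  rw [zs_univ, zs_univ, zs_univ, ← Finset.prod_mul_distrib]
  apply Finset.prod_congr rfl
  intro j _
  have hsq : (-1 : ℂ) ^ ((z j : ℕ)) * (-1) ^ ((z j : ℕ)) = 1 := by
    rcases Fin.exists_fin_two.mp ⟨z j, rfl⟩ with h | h <;> rw [h] <;> norm_num
  by_cases hB : j ∈ B <;> by_cases hB' : j ∈ B' <;>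
    simp [hB, hB', Finset.mem_symmDiff, hsq]

/-- the commutation phase -/
def eps (A B : Finset (Fin n)) : ℂ := ∏ j ∈ B, (if j ∈ A then (-1 : ℂ) else 1)

lemma eps_cases (A B : Finset (Fin n)) : eps A B = 1 ∨ eps A B = -1 := by
  unfold eps
  induction B using Finset.induction with
  | empty => left; simp
  | @insert a s h ih =>
    rw [Finset.prod_insert h]
    rcases ih with h1 | h1 <;> rw [h1] <;> by_cases hA : a ∈ A <;> simp [hA]

lemma eps_sq (A B : Finset (Fin n)) : eps A B * eps A B = 1 := by
  rcases eps_cases A B with h | h <;> rw [h] <;> norm_num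

lemma zs_flip (A B : Finset (Fin n)) (z : Fin n → Fin 2) :
    zs B (flip A z) = eps A B * zs B z := by
  unfold zs flip eps
  rw [← Finset.prod_mul_distrib]
  apply Finset.prod_congr rfl
  intro j _
  rw [sgn_add]
  by_cases hA : j ∈ A <;> simp [hA] <;> ring

end Aux15

namespace Aux15
open scoped symmDiff
open Matrix
variable {n : ℕ}

lemma XA_eq_of (A : Finset (Fin n)) :
    XA n A = Matrix.of fun z w => if w = flip A z then (1 : ℂ) else 0 := rfl

lemma XA_mul_XA (A A' : Finset (Fin n)) : XA n A * XA n A' = XA n (A ∆ A') := by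
  ext z w
  rw [Matrix.mul_apply]
  rw [Finset.sum_eq_single (flip A z)]
  · rw [XA_apply, XA_apply, XA_apply, if_pos rfl, one_mul, flip_flip]
  · intro x _ hx
    rw [XA_apply, if_neg hx, zero_mul]
  · intro hx; exact absurd (Finset.mem_univ _) hx

lemma XA_empty : XA n ∅ = 1 := by
  ext z w
  rw [XA_apply]
  have : flip (∅ : Finset (Fin n)) z = z := by funext i; simp [flip]
  rw [this, Matrix.one_apply]
  simp [eq_comm]

lemma XA_mul_self (A : Finset (Fin n)) : XA n A * XA n A = 1 := by
  rw [XA_mul_XA, symmDiff_self]; exact XA_empty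

lemma XA_conjTranspose (A : Finset (Fin n)) : (XA n A)ᴴ = XA n A := by
  ext z w
  rw [Matrix.conjTranspose_apply, XA_apply, XA_apply]
  by_cases h : w = flip A z
  · rw [if_pos h, if_pos ((flip_inj A).mp h)]; simp
  · rw [if_neg h, if_neg (fun hh => h ((flip_inj A).mpr hh))]
    simp

lemma Zgad_mul_Zgad (B B' : Finset (Fin n)) :
    Zgad n B * Zgad n B' = Zgad n (B ∆ B') := by
  rw [Zgad_eq, Zgad_eq, Zgad_eq, Matrix.diagonal_mul_diagonal]
  exact congrArg Matrix.diagonal (funext fun z => zs_symmDiff B B' z)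

lemma Zgad_empty : Zgad n ∅ = 1 := by
  rw [Zgad_eq]
  have : zs (∅ : Finset (Fin n)) = fun _ => 1 := funext fun z => by simp [zs]
  rw [this, Matrix.diagonal_one]

lemma Zgad_mul_self (B : Finset (Fin n)) : Zgad n B * Zgad n B = 1 := by
  rw [Zgad_mul_Zgad, symmDiff_self]; exact Zgad_empty

lemma Zgad_conjTranspose (B : Finset (Fin n)) : (Zgad n B)ᴴ = Zgad n B := by
  rw [Zgad_eq, Matrix.diagonal_conjTranspose]
  refine congrArg Matrix.diagonal (funext fun z => ?_)
  show star (zs B z) = zs B z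
  rcases zs_cases B z with h | h <;> rw [h] <;> simp

lemma diagonal_mul_XA (d : (Fin n → Fin 2) → ℂ) (A : Finset (Fin n)) :
    Matrix.diagonal d * XA n A = Matrix.of fun z w => if w = flip A z then d z else 0 := by
  ext z w
  rw [Matrix.diagonal_mul, XA_apply, Matrix.of_apply]
  by_cases h : w = flip A z <;> simp [h]

lemma XA_mul_diagonal (d : (Fin n → Fin 2) → ℂ) (A : Finset (Fin n)) :
    XA n A * Matrix.diagonal d = Matrix.of fun z w => if w = flip A z then d (flip A z) else 0 := by
  ext z w
  rw [Matrix.mul_diagonal, XA_apply, Matrix.of_apply]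
  by_cases h : w = flip A z
  · subst h; simp
  · simp [h]

lemma Zgad_mul_XA (A B : Finset (Fin n)) :
    Zgad n B * XA n A = eps A B • (XA n A * Zgad n B) := by
  rw [Zgad_eq, diagonal_mul_XA, XA_mul_diagonal]
  ext z w
  rw [Matrix.smul_apply, Matrix.of_apply, Matrix.of_apply]
  by_cases h : w = flip A z
  · rw [if_pos h, if_pos h, zs_flip, smul_eq_mul, ← mul_assoc, eps_sq, one_mul]
  · rw [if_neg h, if_neg h, smul_zero]

end Aux15

namespace Aux15
open scoped symmDiff
open Matrix Complex
variable {n : ℕ}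

abbrev Ω : Set ℂ := {1, Complex.I, -1, -Complex.I}

lemma omega_mul {a b : ℂ} (ha : a ∈ Ω) (hb : b ∈ Ω) : a * b ∈ Ω := by
  rcases ha with h | h | h | h <;> rcases hb with h' | h' | h' | h' <;>
    subst h <;> subst h' <;>
    simp [Ω, Set.mem_insert_iff, Complex.I_mul_I] <;>
    norm_num [Complex.ext_iff, Complex.I_mul_I]

lemma omega_neg {a : ℂ} (ha : a ∈ Ω) : -a ∈ Ω := by
  rcases ha with h | h | h | h <;> subst h <;> simp [Ω, Set.mem_insert_iff]

lemma omega_star_mem {a : ℂ} (ha : a ∈ Ω) : star a ∈ Ω := by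
  rcases ha with h | h | h | h <;> subst h <;> simp [Ω, Set.mem_insert_iff]

lemma omega_mul_star {a : ℂ} (ha : a ∈ Ω) : a * star a = 1 := by
  rcases ha with h | h | h | h <;> subst h <;>
    simp [Complex.mul_conj] <;> norm_num [Complex.ext_iff]

lemma eps_mem_omega (A B : Finset (Fin n)) : eps A B ∈ Ω := by
  rcases eps_cases A B with h | h <;> rw [h] <;> simp [Ω, Set.mem_insert_iff]

lemma pauli_mul {P Q : Matrix (Fin n → Fin 2) (Fin n → Fin 2) ℂ}
    (hP : P ∈ Pauli n) (hQ : Q ∈ Pauli n) : P * Q ∈ Pauli n := by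
  obtain ⟨ω, hω, A, B, rfl⟩ := hP
  obtain ⟨ω', hω', A', B', rfl⟩ := hQ
  refine ⟨ω * ω' * eps A' B, omega_mul (omega_mul hω hω') (eps_mem_omega A' B), A ∆ A', B ∆ B', ?_⟩
  rw [smul_mul_assoc, mul_smul_comm, smul_smul]
  rw [mul_assoc (XA n A), ← mul_assoc (Zgad n B), Zgad_mul_XA]
  rw [smul_mul_assoc, mul_smul_comm, smul_smul]
  congr 1
  rw [show XA n A * (XA n A' * Zgad n B * Zgad n B')
      = (XA n A * XA n A') * (Zgad n B * Zgad n B') by noncomm_ring,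
    XA_mul_XA, Zgad_mul_Zgad]

lemma pauli_conjTranspose {P : Matrix (Fin n → Fin 2) (Fin n → Fin 2) ℂ}
    (hP : P ∈ Pauli n) : Pᴴ ∈ Pauli n := by
  obtain ⟨ω, hω, A, B, rfl⟩ := hP
  refine ⟨star ω * eps A B, omega_mul (omega_star_mem hω) (eps_mem_omega A B),
    A, B, ?_⟩
  rw [Matrix.conjTranspose_smul, Matrix.conjTranspose_mul, XA_conjTranspose,
    Zgad_conjTranspose, Zgad_mul_XA, smul_smul]

lemma pauli_unitary {P : Matrix (Fin n → Fin 2) (Fin n → Fin 2) ℂ}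
    (hP : P ∈ Pauli n) : P * Pᴴ = 1 := by
  obtain ⟨ω, hω, A, B, rfl⟩ := hP
  rw [Matrix.conjTranspose_smul, Matrix.conjTranspose_mul, XA_conjTranspose, Zgad_conjTranspose]
  rw [smul_mul_assoc, mul_smul_comm, smul_smul]
  rw [mul_assoc, ← mul_assoc (Zgad n B), Zgad_mul_self, one_mul, XA_mul_self]
  rw [omega_mul_star hω, one_smul]

lemma pauli_smul {ω : ℂ} (hω : ω ∈ Ω) {P : Matrix (Fin n → Fin 2) (Fin n → Fin 2) ℂ}
    (hP : P ∈ Pauli n) : ω • P ∈ Pauli n := by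
  obtain ⟨ω', hω', A, B, rfl⟩ := hP
  exact ⟨ω * ω', omega_mul hω hω', A, B, (smul_smul ω ω' _)⟩

lemma pauli_subset_cliff : ∀ k, Pauli n ⊆ Cliff n k := by
  intro k
  induction k using Nat.strong_induction_on with
  | _ k ih =>
    match k with
    | 0 => exact fun P hP => hP
    | 1 => exact fun P hP => hP
    | k + 2 =>
      intro P hP
      refine ⟨pauli_unitary hP, fun Q hQ => ?_⟩
      exact ih (k+1) (by omega) (pauli_mul (pauli_mul hP hQ) (pauli_conjTranspose hP))

lemma cliff_mul_pauli {k : ℕ} {U P : Matrix (Fin n → Fin 2) (Fin n → Fin 2) ℂ}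
    (hU : U ∈ Cliff n k) (hP : P ∈ Pauli n) : U * P ∈ Cliff n k := by
  match k with
  | 0 => exact pauli_mul hU hP
  | 1 => exact pauli_mul hU hP
  | k + 2 =>
    obtain ⟨hUu, hUc⟩ := hU
    constructor
    · rw [Matrix.conjTranspose_mul, mul_assoc, ← mul_assoc P, pauli_unitary hP, one_mul, hUu]
    · intro Q hQ
      have h1 : U * P * Q * (U * P)ᴴ = U * (P * Q * Pᴴ) * Uᴴ := by
        rw [Matrix.conjTranspose_mul]
        noncomm_ring
      rw [h1]
      exact hUc _ (pauli_mul (pauli_mul hP hQ) (pauli_conjTranspose hP))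

lemma cliff_smul {k : ℕ} {ω : ℂ} (hω : ω ∈ Ω)
    {U : Matrix (Fin n → Fin 2) (Fin n → Fin 2) ℂ}
    (hU : U ∈ Cliff n k) : ω • U ∈ Cliff n k := by
  match k with
  | 0 => exact pauli_smul hω hU
  | 1 => exact pauli_smul hω hU
  | k + 2 =>
    obtain ⟨hUu, hUc⟩ := hU
    constructor
    · rw [Matrix.conjTranspose_smul, smul_mul_assoc, mul_smul_comm, smul_smul,
        omega_mul_star hω, one_smul, hUu]
    · intro Q hQ
      have h1 : (ω • U) * Q * (ω • U)ᴴ = (ω * star ω) • (U * Q * Uᴴ) := by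
        rw [Matrix.conjTranspose_smul, smul_mul_assoc, smul_mul_assoc, mul_smul_comm, smul_smul]
      rw [h1, omega_mul_star hω, one_smul]
      exact hUc Q hQ

end Aux15

namespace Aux15
open scoped symmDiff
open Matrix Complex
variable {n : ℕ}

/-- the phase angle -/
def cang (k : ℕ) : ℂ := -(↑Real.pi * Complex.I / (2 : ℂ) ^ k)

/-- diagonal entries of `DopN` -/
def dent (S : Finset (Fin n)) (k : ℕ) (z : Fin n → Fin 2) : ℂ :=
  Complex.exp (cang k * zs S z)

lemma DopN_eq (S : Finset (Fin n)) (k : ℕ) :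
    DopN n S k = Matrix.diagonal (dent S k) := by
  rw [DopN, Zgad_eq, ← Matrix.diagonal_smul, Matrix.exp_diagonal]
  refine congrArg Matrix.diagonal (funext fun z => ?_)
  rw [Pi.coe_exp, ← Complex.exp_eq_exp_ℂ]
  rfl

lemma star_dent (S : Finset (Fin n)) (k : ℕ) (z : Fin n → Fin 2) :
    star (dent S k z) = Complex.exp (-(cang k) * zs S z) := by
  rw [dent, show (star (cexp (cang k * zs S z)) : ℂ) = (starRingEnd ℂ) (cexp (cang k * zs S z)) from rfl, ← Complex.exp_conj]
  congr 1
  rw [_root_.map_mul]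
  congr 1
  · rw [cang]
    have h2 : (starRingEnd ℂ) 2 = 2 := by rw [show (2:ℂ) = ((2:ℝ):ℂ) by norm_num, Complex.conj_ofReal]
    simp [Complex.conj_I, h2]
    ring
  · rcases zs_cases S z with h | h <;> rw [h] <;> simp

lemma dent_mul_star (S : Finset (Fin n)) (k : ℕ) (z : Fin n → Fin 2) :
    dent S k z * star (dent S k z) = 1 := by
  rw [star_dent, dent, ← Complex.exp_add]
  ring_nf
  exact Complex.exp_zero

lemma DopN_unitary (S : Finset (Fin n)) (k : ℕ) :
    DopN n S k * (DopN n S k)ᴴ = 1 := by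
  rw [DopN_eq, Matrix.diagonal_conjTranspose, Matrix.diagonal_mul_diagonal]
  rw [show (fun i => dent S k i * (star (dent S k) : _ → ℂ) i) = fun _ => (1 : ℂ) from
    funext fun z => dent_mul_star S k z]
  exact Matrix.diagonal_one

lemma DopN_isDiag (S : Finset (Fin n)) (k : ℕ) : (DopN n S k).IsDiag := by
  rw [DopN_eq]; exact Matrix.isDiag_diagonal _

lemma cang_succ (k : ℕ) : (2 : ℂ) * cang (k + 1) = cang k := by
  rw [cang, cang, pow_succ]
  have h2 : ((2:ℂ)^k) ≠ 0 := pow_ne_zero _ two_ne_zero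
  field_simp

lemma exp_pi_I_two : Complex.exp (↑Real.pi * Complex.I / 2) = Complex.I := by
  rw [show (↑Real.pi * Complex.I / 2 : ℂ) = ((Real.pi / 2 : ℝ) : ℂ) * Complex.I by
      push_cast; ring,
    Complex.exp_mul_I, ← Complex.ofReal_cos, ← Complex.ofReal_sin,
    Real.cos_pi_div_two, Real.sin_pi_div_two]
  simp

lemma DopN_one_eq (S : Finset (Fin n)) : DopN n S 1 = (-Complex.I) • (XA n ∅ * Zgad n S) := by
  rw [DopN_eq, XA_empty, one_mul, Zgad_eq, ← Matrix.diagonal_smul]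
  refine congrArg Matrix.diagonal (funext fun z => ?_)
  show dent S 1 z = -Complex.I * zs S z
  rw [dent, cang]
  rcases zs_cases S z with h | h <;> rw [h]
  · rw [mul_one, mul_one,
      show -(↑Real.pi * Complex.I / (2:ℂ)^1) = -(↑Real.pi * Complex.I / 2) by norm_num,
      Complex.exp_neg, exp_pi_I_two, Complex.inv_I]
  · rw [mul_neg_one, neg_neg,
      show (↑Real.pi * Complex.I / (2:ℂ)^1) = ↑Real.pi * Complex.I / 2 by norm_num,
      exp_pi_I_two]
    ring

lemma conj_entry (S A : Finset (Fin n)) (k : ℕ) (z : Fin n → Fin 2) :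
    dent S (k+1) z * star (dent S (k+1) (flip A z)) =
      if eps A S = 1 then 1 else dent S k z := by
  rw [star_dent, zs_flip, dent]
  rcases eps_cases A S with he | he <;> rw [he]
  · rw [if_pos rfl, ← Complex.exp_add]
    ring_nf
    exact Complex.exp_zero
  · rw [if_neg (by norm_num), ← Complex.exp_add, dent]
    congr 1
    linear_combination zs S z * cang_succ k

lemma DopN_conj_XA (S A : Finset (Fin n)) (k : ℕ) :
    DopN n S (k+1) * XA n A * (DopN n S (k+1))ᴴ =
      if eps A S = 1 then XA n A else DopN n S k * XA n A := by
  rw [DopN_eq S (k+1), Matrix.diagonal_conjTranspose, diagonal_mul_XA]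
  ext z w
  rw [Matrix.mul_diagonal, Matrix.of_apply,
    apply_ite (fun M : Matrix (Fin n → Fin 2) (Fin n → Fin 2) ℂ => M z w)]
  by_cases h : w = flip A z
  · rw [if_pos h]
    subst h
    have hl : (star (dent S (k+1)) : _ → ℂ) (flip A z) = star (dent S (k+1) (flip A z)) := rfl
    rw [hl, conj_entry, XA_apply, if_pos rfl, DopN_eq, diagonal_mul_XA, Matrix.of_apply,
      if_pos rfl]
  · rw [if_neg h, zero_mul, XA_apply, if_neg h, DopN_eq, diagonal_mul_XA, Matrix.of_apply,
      if_neg h, ite_self]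

lemma Zgad_comm_DH (S B : Finset (Fin n)) (k : ℕ) :
    Zgad n B * (DopN n S k)ᴴ = (DopN n S k)ᴴ * Zgad n B := by
  rw [DopN_eq, Zgad_eq, Matrix.diagonal_conjTranspose, Matrix.diagonal_mul_diagonal,
    Matrix.diagonal_mul_diagonal]
  exact congrArg Matrix.diagonal (funext fun z => mul_comm _ _)

lemma DopN_mem_cliff (S : Finset (Fin n)) : ∀ k, 1 ≤ k → DopN n S k ∈ Cliff n k := by
  intro k
  induction k with
  | zero => omega
  | succ k ih =>
    intro _
    rcases Nat.eq_zero_or_pos k with h0 | h1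
    · subst h0
      show DopN n S 1 ∈ Pauli n
      rw [DopN_one_eq]
      exact ⟨-Complex.I, by right; right; right; rfl, ∅, S, rfl⟩
    · obtain ⟨m, rfl⟩ : ∃ m, k = m + 1 := ⟨k - 1, by omega⟩
      refine ⟨DopN_unitary S _, fun P hP => ?_⟩
      obtain ⟨ω, hω, A, B, rfl⟩ := hP
      have key : DopN n S (m+2) * (ω • (XA n A * Zgad n B)) * (DopN n S (m+2))ᴴ
          = ω • ((DopN n S (m+2) * XA n A * (DopN n S (m+2))ᴴ) * Zgad n B) := by
        rw [mul_smul_comm, smul_mul_assoc]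
        congr 1
        calc DopN n S (m+2) * (XA n A * Zgad n B) * (DopN n S (m+2))ᴴ
            = DopN n S (m+2) * XA n A * (Zgad n B * (DopN n S (m+2))ᴴ) := by noncomm_ring
          _ = DopN n S (m+2) * XA n A * ((DopN n S (m+2))ᴴ * Zgad n B) := by
              rw [Zgad_comm_DH]
          _ = (DopN n S (m+2) * XA n A * (DopN n S (m+2))ᴴ) * Zgad n B := by noncomm_ring
      rw [key, DopN_conj_XA]
      by_cases he : eps A S = 1
      · rw [if_pos he]
        exact pauli_subset_cliff (m+1) ⟨ω, hω, A, B, rfl⟩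
      · rw [if_neg he]
        have h1 : DopN n S (m+1) ∈ Cliff n (m+1) := ih (by omega)
        have h2 : XA n A * Zgad n B ∈ Pauli n :=
          ⟨1, Or.inl rfl, A, B, (one_smul _ _).symm⟩
        have h3 := cliff_mul_pauli h1 h2
        rw [← mul_assoc] at h3
        exact cliff_smul hω h3

end Aux15

theorem stmt15 (n : ℕ) (hn : 1 ≤ n) (k : ℕ) (hk : 1 ≤ k) (S : Finset (Fin n)) :
    DopN n S k ∈ DiagCliff n k := by
  exact ⟨Aux15.DopN_mem_cliff S k hk, Aux15.DopN_isDiag S k⟩
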